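/- Let A be a Pickands dependence function that is twice continuously differentiable on (0,1) with M = sup_{0<t<1} t(1−t) A″(t) < ∞, and let C(u,v) = exp( log(uv) · A( log(v)/log(uv) ) ) for (u,v) ∈ (0,1)². Then for every (u,v) ∈ (0,1)², 0 ≤ ∂²C/∂u∂v (u,v) ≤ (1 + M) · min( 1/(u(1−u)), 1/(v(1−v)) ). -/

import Mathlib

/-!
With `t = log v / log (uv)` and `L = log (uv) < 0`, the chain rule gives
`∂²C/∂u∂v = C/(uv) · (μ(t) ν(t) - t(1-t) A''(t) / L)`.
By convexity the tangent line of `A` at `t` stays below `A`; evaluated at `0` and `1` it gives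
`μ(t) ≤ A 0 ≤ 1` and `ν(t) ≤ A 1 ≤ 1`; with `A ≥ max(t, 1-t)` this forces `μ(t), ν(t) ≥ 0`.
Since also `A'' ≥ 0`, the density is nonnegative. For the upper bound, `A(t) ≥ t` and
`A(t) ≥ 1-t` mean `C ≤ v` and `C ≤ u`, so `C/(uv) ≤ 1/u`, while `-L ≥ -log u ≥ 1-u`; hence
the density is at most `(1/u)(1 + M/(1-u)) ≤ (1+M)/(u(1-u))`, and symmetrically in `v`.
-/

open Set Filter
open scoped Topology

noncomputable section

/-- The bivariate extreme-value copula `C(u,v) = exp(log(uv) · A(log v / log(uv)))`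
associated with a Pickands dependence function `A`. -/
def evCopula2 (A : ℝ → ℝ) (u v : ℝ) : ℝ :=
  Real.exp (Real.log (u * v) * A (Real.log v / Real.log (u * v)))

lemma ConvexOn.add_sub_mul_le_of_hasDerivAt {S : Set ℝ} {f : ℝ → ℝ} {f' x y : ℝ}
    (hfc : ConvexOn ℝ S f) (hx : x ∈ S) (hy : y ∈ S) (hf' : HasDerivAt f f' x) :
    f x + (y - x) * f' ≤ f y := by
  rcases lt_trichotomy x y with hxy | rfl | hyx
  · have := hfc.le_slope_of_hasDerivAt hx hy hxy hf'
    rw [slope_def_field, le_div_iff₀ (sub_pos.2 hxy)] at this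
    linarith
  · simp
  · have := hfc.slope_le_of_hasDerivAt hy hx hyx hf'
    rw [slope_def_field, div_le_iff₀ (sub_pos.2 hyx)] at this
    linarith

lemma ConvexOn.monotoneOn_of_hasDerivAt {S : Set ℝ} {f f' : ℝ → ℝ} (hfc : ConvexOn ℝ S f)
    (hf' : ∀ x ∈ S, HasDerivAt f (f' x) x) : MonotoneOn f' S := by
  intro x hx y hy hxy
  rcases hxy.eq_or_lt with rfl | hxy
  · rfl
  exact (hfc.le_slope_of_hasDerivAt hx hy hxy (hf' x hx)).trans
    (hfc.slope_le_of_hasDerivAt hx hy hxy (hf' y hy))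

lemma ConvexOn.nonneg_of_hasDerivAt_of_hasDerivAt {S : Set ℝ} {f f' : ℝ → ℝ} {f'' x : ℝ}
    (hfc : ConvexOn ℝ S f) (hS : S ∈ 𝓝 x) (hf' : ∀ y ∈ S, HasDerivAt f (f' y) y)
    (hf'' : HasDerivAt f' f'' x) : 0 ≤ f'' := by
  refine hf''.hasDerivWithinAt.nonneg_of_monotoneOn ?_ (hfc.monotoneOn_of_hasDerivAt hf')
  rw [accPt_iff_nhds]
  intro U hU
  have hUS : ∀ᶠ y in 𝓝[≠] x, y ∈ U ∩ S := mem_nhdsWithin_of_mem_nhds (inter_mem hU hS)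
  exact (hUS.and self_mem_nhdsWithin).exists

lemma mul_one_add_div_le {a c K M : ℝ} (ha : a ∈ Ioo 0 1) (hc : c ≤ 1 / a)
    (hK : 1 - a ≤ K) (hM : 0 ≤ M) : c * (1 + M / K) ≤ (1 + M) / (a * (1 - a)) := by
  have h1a : 0 < 1 - a := sub_pos.2 ha.2
  have hpos : 0 < a * (1 - a) := mul_pos ha.1 h1a
  have hK₀ : 0 < K := h1a.trans_le hK
  have ha₀ : 0 < a := ha.1
  calc c * (1 + M / K) ≤ 1 / a * (1 + M / (1 - a)) :=
        mul_le_mul hc (add_le_add_right (div_le_div_of_nonneg_left hM h1a hK) 1)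
          (by positivity) (by positivity)
    _ = (1 - a + M) / (a * (1 - a)) := by field_simp
    _ ≤ (1 + M) / (a * (1 - a)) := div_le_div_of_nonneg_right (by linarith) hpos.le

def evArg (u v : ℝ) : ℝ := Real.log v / Real.log (u * v)

def pickandsMu (A A' : ℝ → ℝ) (t : ℝ) : ℝ := A t - t * A' t

def pickandsNu (A A' : ℝ → ℝ) (t : ℝ) : ℝ := A t + (1 - t) * A' t

def evCopula2Density (A A' A'' : ℝ → ℝ) (u v : ℝ) : ℝ :=
  evCopula2 A u v / (u * v) * (pickandsMu A A' (evArg u v) * pickandsNu A A' (evArg u v) -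
    evArg u v * (1 - evArg u v) * A'' (evArg u v) / Real.log (u * v))

section Derivatives

variable {A A' : ℝ → ℝ} {u v : ℝ}

lemma evCopula2_eq_exp : evCopula2 A u v = Real.exp (Real.log (u * v) * A (evArg u v)) := rfl

lemma hasDerivAt_evArg_fst (hu : 0 < u) (hv : 0 < v) (hL : Real.log (u * v) ≠ 0) :
    HasDerivAt (fun x => evArg x v) (-evArg u v / (u * Real.log (u * v))) u := by
  have hlog : HasDerivAt (fun x => Real.log (x * v)) (v / (u * v)) u :=
    (hasDerivAt_mul_const v).log (by positivity)
  refine ((hasDerivAt_const u (Real.log v)).div hlog hL).congr_deriv ?_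
  unfold evArg
  generalize Real.log (u * v) = L at hL ⊢
  field_simp
  ring

lemma hasDerivAt_evArg_snd (hu : 0 < u) (hv : 0 < v) (hL : Real.log (u * v) ≠ 0) :
    HasDerivAt (fun y => evArg u y) ((1 - evArg u v) / (v * Real.log (u * v))) v := by
  have hlog := ((hasDerivAt_id' v).const_mul u).log (mul_pos hu hv).ne'
  refine ((Real.hasDerivAt_log hv.ne').div hlog hL).congr_deriv ?_
  unfold evArg
  generalize Real.log (u * v) = L at hL ⊢
  field_simp

lemma hasDerivAt_evCopula2_fst (hu : 0 < u) (hv : 0 < v) (hL : Real.log (u * v) ≠ 0)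
    (hA : HasDerivAt A (A' (evArg u v)) (evArg u v)) :
    HasDerivAt (fun x => evCopula2 A x v)
      (evCopula2 A u v / u * pickandsMu A A' (evArg u v)) u := by
  have hlog : HasDerivAt (fun x => Real.log (x * v)) (v / (u * v)) u :=
    (hasDerivAt_mul_const v).log (by positivity)
  refine ((hlog.mul (hA.comp u (hasDerivAt_evArg_fst hu hv hL))).exp).congr_deriv ?_
  simp only [Pi.mul_apply, Function.comp_apply]
  rw [← evCopula2_eq_exp, pickandsMu]
  generalize Real.log (u * v) = L at hL ⊢
  field_simp
  ring

lemma hasDerivAt_evCopula2_snd (hu : 0 < u) (hv : 0 < v) (hL : Real.log (u * v) ≠ 0)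
    (hA : HasDerivAt A (A' (evArg u v)) (evArg u v)) :
    HasDerivAt (fun y => evCopula2 A u y)
      (evCopula2 A u v / v * pickandsNu A A' (evArg u v)) v := by
  have hlog := ((hasDerivAt_id' v).const_mul u).log (mul_pos hu hv).ne'
  refine ((hlog.mul (hA.comp v (hasDerivAt_evArg_snd hu hv hL))).exp).congr_deriv ?_
  simp only [Pi.mul_apply, Function.comp_apply]
  rw [← evCopula2_eq_exp, pickandsNu]
  generalize Real.log (u * v) = L at hL ⊢
  field_simp

lemma hasDerivAt_pickandsMu {A'' : ℝ → ℝ} {t : ℝ} (hA : HasDerivAt A (A' t) t)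
    (hA' : HasDerivAt A' (A'' t) t) :
    HasDerivAt (pickandsMu A A') (-(t * A'' t)) t := by
  refine (hA.sub ((hasDerivAt_id t).mul hA')).congr_deriv ?_
  simp

lemma hasDerivAt_evCopula2_fst_snd {A'' : ℝ → ℝ} (hu : 0 < u) (hv : 0 < v)
    (hL : Real.log (u * v) ≠ 0) (hA : HasDerivAt A (A' (evArg u v)) (evArg u v))
    (hA' : HasDerivAt A' (A'' (evArg u v)) (evArg u v)) :
    HasDerivAt (fun y => evCopula2 A u y / u * pickandsMu A A' (evArg u y))
      (evCopula2Density A A' A'' u v) v := by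
  refine (((hasDerivAt_evCopula2_snd hu hv hL hA).div_const u).mul
    ((hasDerivAt_pickandsMu hA hA').comp v (hasDerivAt_evArg_snd hu hv hL))).congr_deriv ?_
  rw [Function.comp_apply, evCopula2Density]
  generalize Real.log (u * v) = L at hL ⊢
  field_simp
  ring

end Derivatives

section Pickands

variable {A A' : ℝ → ℝ} {t : ℝ}

lemma pickandsMu_le (hconv : ConvexOn ℝ (Icc 0 1) A) (ht : t ∈ Icc 0 1)
    (hA : HasDerivAt A (A' t) t) : pickandsMu A A' t ≤ A 0 := by
  have := hconv.add_sub_mul_le_of_hasDerivAt ht (left_mem_Icc.2 zero_le_one) hA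
  rw [pickandsMu]
  linarith

lemma pickandsNu_le (hconv : ConvexOn ℝ (Icc 0 1) A) (ht : t ∈ Icc 0 1)
    (hA : HasDerivAt A (A' t) t) : pickandsNu A A' t ≤ A 1 := by
  have := hconv.add_sub_mul_le_of_hasDerivAt ht (right_mem_Icc.2 zero_le_one) hA
  rw [pickandsNu]
  linarith

lemma pickandsMu_mul_pickandsNu_mem_Icc (hconv : ConvexOn ℝ (Icc 0 1) A)
    (hbounds : ∀ s ∈ Icc (0 : ℝ) 1, max s (1 - s) ≤ A s ∧ A s ≤ 1) (ht : t ∈ Ioo 0 1)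
    (hA : HasDerivAt A (A' t) t) :
    pickandsMu A A' t * pickandsNu A A' t ∈ Icc 0 1 := by
  have htI : t ∈ Icc (0 : ℝ) 1 := Ioo_subset_Icc_self ht
  have hμ := pickandsMu_le hconv htI hA
  have hν := pickandsNu_le hconv htI hA
  have hA0 := (hbounds 0 (left_mem_Icc.2 zero_le_one)).2
  have hA1 := (hbounds 1 (right_mem_Icc.2 zero_le_one)).2
  obtain ⟨hAt, -⟩ := hbounds t htI
  rw [max_le_iff] at hAt
  rw [pickandsMu] at hμ ⊢
  rw [pickandsNu] at hν ⊢
  -- `μ, ν ≤ 1` and `A t ≥ max t (1 - t)` force `|A' t| ≤ 1`, whence `μ, ν ≥ 0`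
  have hA'_le : A' t ≤ 1 := by nlinarith [ht.2]
  have hA'_ge : -1 ≤ A' t := by nlinarith [ht.1]
  constructor
  · apply mul_nonneg <;> nlinarith [ht.1, ht.2]
  · apply mul_le_one₀ <;> nlinarith [ht.1, ht.2]

end Pickands

section Bounds

variable {A A' A'' : ℝ → ℝ} {u v : ℝ}

lemma log_mul_neg_of_mem_Ioo (hu : u ∈ Ioo 0 1) (hv : v ∈ Ioo 0 1) : Real.log (u * v) < 0 := by
  rw [Real.log_mul hu.1.ne' hv.1.ne']
  linarith [Real.log_neg hu.1 hu.2, Real.log_neg hv.1 hv.2]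

lemma evArg_mem_Ioo (hu : u ∈ Ioo 0 1) (hv : v ∈ Ioo 0 1) : evArg u v ∈ Ioo 0 1 := by
  have hlu := Real.log_neg hu.1 hu.2
  have hlv := Real.log_neg hv.1 hv.2
  rw [evArg, Real.log_mul hu.1.ne' hv.1.ne']
  exact ⟨div_pos_of_neg_of_neg hlv (by linarith), (div_lt_one_of_neg (by linarith)).2 (by linarith)⟩

lemma evCopula2_le_right (hu : u ∈ Ioo 0 1) (hv : v ∈ Ioo 0 1)
    (hA : evArg u v ≤ A (evArg u v)) : evCopula2 A u v ≤ v := by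
  have hL := log_mul_neg_of_mem_Ioo hu hv
  calc evCopula2 A u v ≤ Real.exp (Real.log (u * v) * evArg u v) :=
        Real.exp_le_exp.2 (mul_le_mul_of_nonpos_left hA hL.le)
    _ = v := by rw [evArg, mul_div_cancel₀ _ hL.ne, Real.exp_log hv.1]

lemma evCopula2_le_left (hu : u ∈ Ioo 0 1) (hv : v ∈ Ioo 0 1)
    (hA : 1 - evArg u v ≤ A (evArg u v)) : evCopula2 A u v ≤ u := by
  have hL := log_mul_neg_of_mem_Ioo hu hv
  calc evCopula2 A u v ≤ Real.exp (Real.log (u * v) * (1 - evArg u v)) :=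
        Real.exp_le_exp.2 (mul_le_mul_of_nonpos_left hA hL.le)
    _ = u := by
      rw [mul_one_sub, evArg, mul_div_cancel₀ _ hL.ne, Real.log_mul hu.1.ne' hv.1.ne',
        add_sub_cancel_right, Real.exp_log hu.1]

lemma evCopula2Density_nonneg (hu : u ∈ Ioo 0 1) (hv : v ∈ Ioo 0 1)
    (hμν : 0 ≤ pickandsMu A A' (evArg u v) * pickandsNu A A' (evArg u v))
    (hA'' : 0 ≤ A'' (evArg u v)) : 0 ≤ evCopula2Density A A' A'' u v := by
  have ht := evArg_mem_Ioo hu hv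
  have hq : evArg u v * (1 - evArg u v) * A'' (evArg u v) / Real.log (u * v) ≤ 0 :=
    div_nonpos_of_nonneg_of_nonpos (mul_nonneg (mul_nonneg ht.1.le (by linarith [ht.2])) hA'')
      (log_mul_neg_of_mem_Ioo hu hv).le
  have hc : 0 ≤ evCopula2 A u v / (u * v) := div_nonneg (Real.exp_pos _).le (mul_pos hu.1 hv.1).le
  exact mul_nonneg hc (by linarith)

lemma evCopula2Density_le_mul (hu : u ∈ Ioo 0 1) (hv : v ∈ Ioo 0 1) {M : ℝ}
    (hμν : pickandsMu A A' (evArg u v) * pickandsNu A A' (evArg u v) ≤ 1)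
    (hM : evArg u v * (1 - evArg u v) * A'' (evArg u v) ≤ M) :
    evCopula2Density A A' A'' u v ≤ evCopula2 A u v / (u * v) * (1 + M / -Real.log (u * v)) := by
  have hK : 0 < -Real.log (u * v) := neg_pos.2 (log_mul_neg_of_mem_Ioo hu hv)
  have hc : 0 ≤ evCopula2 A u v / (u * v) := div_nonneg (Real.exp_pos _).le (mul_pos hu.1 hv.1).le
  rw [evCopula2Density, sub_eq_add_neg, ← div_neg]
  exact mul_le_mul_of_nonneg_left (add_le_add hμν (div_le_div_of_nonneg_right hM hK.le)) hc

lemma evCopula2Density_le (hu : u ∈ Ioo 0 1) (hv : v ∈ Ioo 0 1) {M : ℝ}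
    (hA : max (evArg u v) (1 - evArg u v) ≤ A (evArg u v))
    (hμν : pickandsMu A A' (evArg u v) * pickandsNu A A' (evArg u v) ≤ 1)
    (hA'' : 0 ≤ A'' (evArg u v)) (hM : evArg u v * (1 - evArg u v) * A'' (evArg u v) ≤ M) :
    evCopula2Density A A' A'' u v ≤
      (1 + M) * min (1 / (u * (1 - u))) (1 / (v * (1 - v))) := by
  have ht := evArg_mem_Ioo hu hv
  have hM₀ : 0 ≤ M := (mul_nonneg (mul_nonneg ht.1.le (sub_nonneg.2 ht.2.le)) hA'').trans hM
  have huv : 0 < u * v := mul_pos hu.1 hv.1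
  rw [max_le_iff] at hA
  have hcu : evCopula2 A u v / (u * v) ≤ 1 / u :=
    (div_le_div_of_nonneg_right (evCopula2_le_right hu hv hA.1) huv.le).trans_eq
      (by field_simp [hv.1.ne'])
  have hcv : evCopula2 A u v / (u * v) ≤ 1 / v :=
    (div_le_div_of_nonneg_right (evCopula2_le_left hu hv hA.2) huv.le).trans_eq
      (by field_simp [hu.1.ne'])
  have hLu : 1 - u ≤ -Real.log (u * v) := by
    rw [Real.log_mul hu.1.ne' hv.1.ne']
    linarith [Real.log_le_sub_one_of_pos hu.1, Real.log_neg hv.1 hv.2]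
  have hLv : 1 - v ≤ -Real.log (u * v) := by
    rw [Real.log_mul hu.1.ne' hv.1.ne']
    linarith [Real.log_le_sub_one_of_pos hv.1, Real.log_neg hu.1 hu.2]
  have hle := evCopula2Density_le_mul hu hv hμν hM
  rw [mul_min_of_nonneg _ _ (by linarith), mul_one_div, mul_one_div]
  exact le_min (hle.trans (mul_one_add_div_le hu hcu hLu hM₀))
    (hle.trans (mul_one_add_div_le hv hcv hLv hM₀))

end Bounds

theorem evCopula2_mixed_second_deriv_bound_general
    (A A' A'' : ℝ → ℝ)
    -- A is a Pickands dependence function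
    (hconv : ConvexOn ℝ (Icc (0 : ℝ) 1) A)
    (hbounds : ∀ t ∈ Icc (0 : ℝ) 1, max t (1 - t) ≤ A t ∧ A t ≤ 1)
    -- A is twice continuously differentiable on (0,1)
    (hA' : ∀ t ∈ Ioo (0 : ℝ) 1, HasDerivAt A (A' t) t)
    (hA'' : ∀ t ∈ Ioo (0 : ℝ) 1, HasDerivAt A' (A'' t) t)
    -- M = sup_{0<t<1} t(1−t)A″(t) < ∞
    (M : ℝ) (hM : ∀ t ∈ Ioo (0 : ℝ) 1, t * (1 - t) * A'' t ≤ M) :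
    ∀ D E : ℝ → ℝ → ℝ,
      (∀ u ∈ Ioo (0 : ℝ) 1, ∀ v ∈ Ioo (0 : ℝ) 1,
        HasDerivAt (fun x : ℝ => evCopula2 A x v) (D u v) u) →
      (∀ u ∈ Ioo (0 : ℝ) 1, ∀ v ∈ Ioo (0 : ℝ) 1,
        HasDerivAt (fun y : ℝ => D u y) (E u v) v) →
      ∀ u ∈ Ioo (0 : ℝ) 1, ∀ v ∈ Ioo (0 : ℝ) 1,
        0 ≤ E u v ∧
        E u v ≤ (1 + M) * min (1 / (u * (1 - u))) (1 / (v * (1 - v))) := by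
  intro D E hD hE u hu v hv
  have ht := evArg_mem_Ioo hu hv
  have hD_eq : ∀ y ∈ Ioo (0 : ℝ) 1,
      D u y = evCopula2 A u y / u * pickandsMu A A' (evArg u y) := fun y hy =>
    (hD u hu y hy).unique (hasDerivAt_evCopula2_fst hu.1 hy.1
      (log_mul_neg_of_mem_Ioo hu hy).ne (hA' _ (evArg_mem_Ioo hu hy)))
  have hE_eq : E u v = evCopula2Density A A' A'' u v :=
    (hE u hu v hv).unique ((hasDerivAt_evCopula2_fst_snd hu.1 hv.1
      (log_mul_neg_of_mem_Ioo hu hv).ne (hA' _ ht) (hA'' _ ht)).congr_of_eventuallyEq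
        (eventually_of_mem (Ioo_mem_nhds hv.1 hv.2) hD_eq))
  have hA''_nonneg : 0 ≤ A'' (evArg u v) :=
    (hconv.subset Ioo_subset_Icc_self (convex_Ioo 0 1)).nonneg_of_hasDerivAt_of_hasDerivAt
      (Ioo_mem_nhds ht.1 ht.2) hA' (hA'' _ ht)
  obtain ⟨hμν₀, hμν₁⟩ := pickandsMu_mul_pickandsNu_mem_Icc hconv hbounds ht (hA' _ ht)
  rw [hE_eq]
  exact ⟨evCopula2Density_nonneg hu hv hμν₀ hA''_nonneg,
    evCopula2Density_le hu hv (hbounds _ (Ioo_subset_Icc_self ht)).1 hμν₁ hA''_nonneg (hM _ ht)⟩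

/-- **Bound on the extreme-value copula density.** If `A` is twice continuously
differentiable on `(0,1)` with `t(1−t)A″(t) ≤ M` on `(0,1)`, then on `(0,1)²` the mixed
second-order partial derivative `∂²C/∂u∂v` satisfies
`0 ≤ ∂²C/∂u∂v ≤ (1+M) min(1/(u(1−u)), 1/(v(1−v)))`. -/
theorem evCopula2_mixed_second_deriv_bound
    (A A' A'' : ℝ → ℝ)
    -- A is a Pickands dependence function
    (hconv : ConvexOn ℝ (Icc (0 : ℝ) 1) A)
    (hbounds : ∀ t ∈ Icc (0 : ℝ) 1, max t (1 - t) ≤ A t ∧ A t ≤ 1)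
    -- A is twice continuously differentiable on (0,1)
    (hA' : ∀ t ∈ Ioo (0 : ℝ) 1, HasDerivAt A (A' t) t)
    (hA'' : ∀ t ∈ Ioo (0 : ℝ) 1, HasDerivAt A' (A'' t) t)
    (hA''cont : ContinuousOn A'' (Ioo (0 : ℝ) 1))
    -- M = sup_{0<t<1} t(1−t)A″(t) < ∞
    (M : ℝ) (hM : ∀ t ∈ Ioo (0 : ℝ) 1, t * (1 - t) * A'' t ≤ M) :
    ∀ D E : ℝ → ℝ → ℝ,
      (∀ u ∈ Ioo (0 : ℝ) 1, ∀ v ∈ Ioo (0 : ℝ) 1,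
        HasDerivAt (fun x : ℝ => evCopula2 A x v) (D u v) u) →
      (∀ u ∈ Ioo (0 : ℝ) 1, ∀ v ∈ Ioo (0 : ℝ) 1,
        HasDerivAt (fun y : ℝ => D u y) (E u v) v) →
      ∀ u ∈ Ioo (0 : ℝ) 1, ∀ v ∈ Ioo (0 : ℝ) 1,
        0 ≤ E u v ∧
        E u v ≤ (1 + M) * min (1 / (u * (1 - u))) (1 / (v * (1 - v))) :=
  evCopula2_mixed_second_deriv_bound_general A A' A'' hconv hbounds hA' hA'' M hM

end
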